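/- Let H be a closed subgroup of GL(n,ℝ) and let U ⊆ ℝⁿ be open and Hᵀ-invariant. If U admits a topological quasi-section, then for every ξ ∈ U the stabilizer H_ξ = {h ∈ H : hᵀξ = ξ} is compact. -/

import Mathlib

open Matrix Set Topology
open scoped MatrixGroups

noncomputable section

variable {n : ℕ}

/-- The transpose action of an element of `GL(n,ℝ)` on `ℝⁿ`: `(h, ξ) ↦ hᵀ ξ`. -/
def tAct (h : GL (Fin n) ℝ) (v : Fin n → ℝ) : Fin n → ℝ :=
  ((h : Matrix (Fin n) (Fin n) ℝ)ᵀ) *ᵥ v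

/-- A set `U ⊆ ℝⁿ` is `Hᵀ`-invariant. -/
def TInvariant (H : Subgroup (GL (Fin n) ℝ)) (U : Set (Fin n → ℝ)) : Prop :=
  ∀ h ∈ H, ∀ v ∈ U, tAct h v ∈ U

/-- `HᵀC = {hᵀ c : h ∈ H, c ∈ C}`. -/
def tOrb (H : Subgroup (GL (Fin n) ℝ)) (C : Set (Fin n → ℝ)) : Set (Fin n → ℝ) :=
  {v | ∃ h ∈ H, ∃ c ∈ C, tAct h c = v}

/-- `((Y,Z)) = {h ∈ H : hᵀY ∩ Z ≠ ∅}`, as a set of elements of `GL(n,ℝ)`. -/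
def meetSet (H : Subgroup (GL (Fin n) ℝ)) (Y Z : Set (Fin n → ℝ)) :
    Set (GL (Fin n) ℝ) :=
  {h | h ∈ H ∧ ∃ y ∈ Y, tAct h y ∈ Z}

/-- `C` is a topological quasi-section for `U`: `C` is open, `HᵀC = U`, and `((C,C))`
is relatively compact. -/
def IsQuasiSection (H : Subgroup (GL (Fin n) ℝ)) (U C : Set (Fin n → ℝ)) : Prop :=
  IsOpen C ∧ C ⊆ U ∧ tOrb H C = U ∧ IsCompact (closure (meetSet H C C))

/-- `C` is a topological section for `U`: the map `H × C → U, (h,c) ↦ hᵀc` is a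
homeomorphism. -/
def IsTopSection (H : Subgroup (GL (Fin n) ℝ)) (U C : Set (Fin n → ℝ)) : Prop :=
  C ⊆ U ∧ ∃ e : (↥H × ↥C) ≃ₜ ↥U,
    ∀ (h : ↥H) (c : ↥C), ((e (h, c) : ↥U) : Fin n → ℝ) = tAct (h : GL (Fin n) ℝ) (c : Fin n → ℝ)

/-- The orbit equivalence relation on `U` induced by the transpose action of `H`.
`Quot (orbitRel H U)` is the orbit space `U/Hᵀ`, carrying the quotient topology. -/
def orbitRel (H : Subgroup (GL (Fin n) ℝ)) (U : Set (Fin n → ℝ)) (x y : U) : Prop :=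
  ∃ h ∈ H, tAct h (x : Fin n → ℝ) = (y : Fin n → ℝ)

/-!
If `ξ = h₀ᵀ c` with `c ∈ C`, conjugation by `h₀` carries the stabilizer `H_ξ` into `((C,C))`,
since `(h₀ h h₀⁻¹)ᵀ c = h₀⁻ᵀ hᵀ ξ = c`. Hence `H_ξ` is a closed subset of a conjugate of the
compact set `closure ((C,C))`.
-/

lemma tAct_mul (a b : GL (Fin n) ℝ) (v : Fin n → ℝ) :
    tAct (a * b) v = tAct b (tAct a v) := by
  simp only [tAct, Units.val_mul, transpose_mul, mulVec_mulVec]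

lemma tAct_one (v : Fin n → ℝ) : tAct (1 : GL (Fin n) ℝ) v = v := by
  simp only [tAct, Units.val_one, transpose_one, one_mulVec]

lemma tAct_inv_tAct (a : GL (Fin n) ℝ) (v : Fin n → ℝ) : tAct a⁻¹ (tAct a v) = v := by
  rw [← tAct_mul, mul_inv_cancel, tAct_one]

lemma continuous_tAct (ξ : Fin n → ℝ) : Continuous (fun h : GL (Fin n) ℝ => tAct h ξ) :=
  Units.continuous_val.matrix_transpose.matrix_mulVec continuous_const

lemma isClosed_stabilizer {H : Subgroup (GL (Fin n) ℝ)} (hH : IsClosed (H : Set (GL (Fin n) ℝ)))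
    (ξ : Fin n → ℝ) : IsClosed {h : GL (Fin n) ℝ | h ∈ H ∧ tAct h ξ = ξ} :=
  hH.inter (isClosed_eq (continuous_tAct ξ) continuous_const)

lemma conj_mem_meetSet_of_tAct_eq {H : Subgroup (GL (Fin n) ℝ)} {C : Set (Fin n → ℝ)}
    {h₀ h : GL (Fin n) ℝ} (hh₀ : h₀ ∈ H) (hh : h ∈ H) {c : Fin n → ℝ} (hc : c ∈ C)
    (hfix : tAct h (tAct h₀ c) = tAct h₀ c) : h₀ * h * h₀⁻¹ ∈ meetSet H C C := by
  refine ⟨mul_mem (mul_mem hh₀ hh) (inv_mem hh₀), c, hc, ?_⟩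
  rwa [tAct_mul, tAct_mul, hfix, tAct_inv_tAct]

lemma stabilizer_subset_conj_meetSet {H : Subgroup (GL (Fin n) ℝ)} {C : Set (Fin n → ℝ)}
    {h₀ : GL (Fin n) ℝ} (hh₀ : h₀ ∈ H) {c : Fin n → ℝ} (hc : c ∈ C) :
    {h : GL (Fin n) ℝ | h ∈ H ∧ tAct h (tAct h₀ c) = tAct h₀ c} ⊆
      (fun g => h₀⁻¹ * g * h₀) '' meetSet H C C :=
  fun h ⟨hh, hfix⟩ => ⟨h₀ * h * h₀⁻¹, conj_mem_meetSet_of_tAct_eq hh₀ hh hc hfix, by group⟩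

theorem stabilizer_compact_of_quasiSection_general
    (H : Subgroup (GL (Fin n) ℝ)) (hH : IsClosed (H : Set (GL (Fin n) ℝ)))
    (U : Set (Fin n → ℝ))
    (C : Set (Fin n → ℝ)) (hC : IsQuasiSection H U C) :
    ∀ ξ ∈ U, IsCompact {h : GL (Fin n) ℝ | h ∈ H ∧ tAct h ξ = ξ} := by
  obtain ⟨-, -, hOrb, hcompact⟩ := hC
  intro ξ hξ
  obtain ⟨h₀, hh₀, c, hc, rfl⟩ : ∃ h ∈ H, ∃ c ∈ C, tAct h c = ξ := by
    rwa [← hOrb] at hξ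
  have hconj : Continuous (fun g : GL (Fin n) ℝ => h₀⁻¹ * g * h₀) := by fun_prop
  exact (hcompact.image hconj).of_isClosed_subset (isClosed_stabilizer hH _)
    ((stabilizer_subset_conj_meetSet hh₀ hc).trans (image_mono subset_closure))

/-- If the open `Hᵀ`-invariant set `U` admits a topological
quasi-section, then every stabilizer `H_ξ`, `ξ ∈ U`, is compact. -/
theorem stabilizer_compact_of_quasiSection
    (H : Subgroup (GL (Fin n) ℝ)) (hH : IsClosed (H : Set (GL (Fin n) ℝ)))
    (U : Set (Fin n → ℝ)) (hUopen : IsOpen U) (hUinv : TInvariant H U)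
    (C : Set (Fin n → ℝ)) (hC : IsQuasiSection H U C) :
    ∀ ξ ∈ U, IsCompact {h : GL (Fin n) ℝ | h ∈ H ∧ tAct h ξ = ξ} :=
  stabilizer_compact_of_quasiSection_general H hH U C hC
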